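/- arXiv:2103.01294 — 3 statements merged into one kernel-verified Lean document; each statement's English description precedes it below -/
import Mathlib

section
/- Let p and c₁ be positive integers, let α ≥ 0, and let u, û ∈ ℝ^p be vectors such that: (i) the number of indices i with u_i ≠ 0 is at most c₁; (ii) the number of indices i with û_i ≠ 0 is at most c₁; (iii) for every index i with û_i ≠ 0 one has |û_i − u_i| ≤ α; and (iv) for every index i with û_i = 0 one has |u_i| ≤ 2α. Then the Euclidean norm satisfies ‖u − û‖₂ ≤ 2.5 · α · √c₁. -/
theorem stmt_0 (p c₁ : ℕ) (hp : 0 < p) (hc₁ : 0 < c₁) (α : ℝ) (hα : 0 ≤ α)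
    (u uhat : EuclideanSpace ℝ (Fin p))
    (hu : (Finset.univ.filter fun i => u i ≠ 0).card ≤ c₁)
    (huhat : (Finset.univ.filter fun i => uhat i ≠ 0).card ≤ c₁)
    (hclose : ∀ i, uhat i ≠ 0 → |uhat i - u i| ≤ α)
    (hzero : ∀ i, uhat i = 0 → |u i| ≤ 2 * α) :
    ‖u - uhat‖ ≤ 2.5 * α * Real.sqrt c₁ := by
  have hnorm : ‖u - uhat‖ = Real.sqrt (∑ i, (u i - uhat i) ^ 2) := by
    rw [EuclideanSpace.norm_eq]
    congr 1
    refine Finset.sum_congr rfl fun i _ => ?_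
    simp [PiLp.sub_apply, Real.norm_eq_abs, sq_abs]
  have key : (∑ i, (u i - uhat i) ^ 2) ≤ 5 * c₁ * α ^ 2 := by
    classical
    rw [← Finset.sum_filter_add_sum_filter_not Finset.univ (fun i => uhat i ≠ 0)]
    have h1 : ∑ i ∈ Finset.univ.filter (fun i => uhat i ≠ 0), (u i - uhat i) ^ 2
        ≤ c₁ * α ^ 2 := by
      calc ∑ i ∈ Finset.univ.filter (fun i => uhat i ≠ 0), (u i - uhat i) ^ 2
          ≤ ∑ _i ∈ Finset.univ.filter (fun i => uhat i ≠ 0), α ^ 2 := by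
            refine Finset.sum_le_sum fun i hi => ?_
            rw [Finset.mem_filter] at hi
            have := hclose i hi.2
            calc (u i - uhat i) ^ 2 = |uhat i - u i| ^ 2 := by
                  rw [sq_abs]; ring
              _ ≤ α ^ 2 := by
                  apply pow_le_pow_left₀ (abs_nonneg _) this
        _ = (Finset.univ.filter (fun i => uhat i ≠ 0)).card * α ^ 2 := by
            rw [Finset.sum_const, nsmul_eq_mul]
        _ ≤ c₁ * α ^ 2 := by
            apply mul_le_mul_of_nonneg_right _ (sq_nonneg α)
            exact_mod_cast huhat
    have h2 : ∑ i ∈ Finset.univ.filter (fun i => ¬ uhat i ≠ 0), (u i - uhat i) ^ 2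
        ≤ 4 * c₁ * α ^ 2 := by
      have hsub : ∑ i ∈ Finset.univ.filter (fun i => ¬ uhat i ≠ 0), (u i - uhat i) ^ 2
          = ∑ i ∈ (Finset.univ.filter (fun i => ¬ uhat i ≠ 0)).filter (fun i => u i ≠ 0),
              (u i - uhat i) ^ 2 := by
        refine (Finset.sum_filter_of_ne ?_).symm
        intro i hi hne
        rw [Finset.mem_filter, not_not] at hi
        intro h0
        apply hne
        rw [hi.2, h0, sub_zero]
        norm_num
      rw [hsub]
      calc ∑ i ∈ (Finset.univ.filter (fun i => ¬ uhat i ≠ 0)).filter (fun i => u i ≠ 0),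
              (u i - uhat i) ^ 2
          ≤ ∑ _i ∈ (Finset.univ.filter (fun i => ¬ uhat i ≠ 0)).filter (fun i => u i ≠ 0),
              (2 * α) ^ 2 := by
            refine Finset.sum_le_sum fun i hi => ?_
            rw [Finset.mem_filter, Finset.mem_filter, not_not] at hi
            have h0 := hi.1.2
            have := hzero i h0
            calc (u i - uhat i) ^ 2 = |u i| ^ 2 := by rw [sq_abs, h0, sub_zero]
              _ ≤ (2 * α) ^ 2 := by
                  apply pow_le_pow_left₀ (abs_nonneg _) this
        _ = ((Finset.univ.filter (fun i => ¬ uhat i ≠ 0)).filter (fun i => u i ≠ 0)).card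
              * (2 * α) ^ 2 := by rw [Finset.sum_const, nsmul_eq_mul]
        _ ≤ c₁ * (2 * α) ^ 2 := by
            apply mul_le_mul_of_nonneg_right _ (sq_nonneg _)
            have hsubset : (Finset.univ.filter (fun i => ¬ uhat i ≠ 0)).filter
                (fun i => u i ≠ 0) ⊆ Finset.univ.filter (fun i => u i ≠ 0) := by
              intro i hi
              rw [Finset.mem_filter] at hi ⊢
              exact ⟨Finset.mem_univ i, hi.2⟩
            calc ((((Finset.univ.filter (fun i => ¬ uhat i ≠ 0)).filter
                  (fun i => u i ≠ 0)).card : ℝ))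
                ≤ ((Finset.univ.filter (fun i => u i ≠ 0)).card : ℝ) := by
                  exact_mod_cast Finset.card_le_card hsubset
              _ ≤ c₁ := by exact_mod_cast hu
        _ = 4 * c₁ * α ^ 2 := by ring
    linarith
  rw [hnorm]
  have h525 : (5 : ℝ) * c₁ * α ^ 2 ≤ (2.5 * α * Real.sqrt c₁) ^ 2 := by
    have hs : Real.sqrt c₁ ^ 2 = (c₁ : ℝ) := Real.sq_sqrt (Nat.cast_nonneg c₁)
    have : (2.5 * α * Real.sqrt c₁) ^ 2 = 6.25 * α ^ 2 * (Real.sqrt c₁ ^ 2) := by ring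
    rw [this, hs]
    nlinarith [sq_nonneg α, Nat.cast_nonneg (α := ℝ) c₁]
  have hrhs : 0 ≤ 2.5 * α * Real.sqrt c₁ := by positivity
  calc Real.sqrt (∑ i, (u i - uhat i) ^ 2)
      ≤ Real.sqrt ((2.5 * α * Real.sqrt c₁) ^ 2) :=
        Real.sqrt_le_sqrt (le_trans key h525)
    _ = 2.5 * α * Real.sqrt c₁ := Real.sqrt_sq hrhs
end

section
/- Let L : ℝ^p → ℝ be convex and differentiable with K-Lipschitz gradient (i.e., ‖∇L(u) − ∇L(v)‖ ≤ K‖u − v‖ for all u, v), where K > 0, and let w* ∈ ℝ^p satisfy ∇L(w*) = 0. Let 0 < η ≤ 2/K, let w, Δ ∈ ℝ^p be arbitrary, and set A = Δ − ∇L(w). Then ‖(w − ηΔ) − w*‖² ≤ ‖w − w*‖² − (2η − Kη²)(L(w) − L(w*)) − 2η⟨w − η∇L(w) − w*, A⟩ + η²‖A‖². -/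
open RealInnerProductSpace Set

/-! Write `g = ∇L w`, `b = w - w*` and `f = L w - L w*`. Since `(w - ηΔ) - w* = (b - ηg) - ηA`,
expanding the square reduces the claim to the exact gradient step
`‖b - ηg‖² ≤ ‖b‖² - (2η - Kη²) f`. The descent lemma
`L v ≤ L u + ⟪∇L u, v - u⟫ + K/2 ‖v - u‖²`, applied at `w` towards `w - g/K` and at `w*` towards
`w* + g/K`, combined with the first-order convexity inequality, gives `‖g‖² ≤ 2Kf` and
`2Kf + ‖g‖² ≤ 2K⟪g, b⟫`. Hence `‖b - ηg‖² ≤ ‖b‖² - 2ηf + η(η - 1/K)‖g‖²`, and the last term is at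
most `Kη²f`: trivially when `Kη ≤ 1`, and by `‖g‖² ≤ 2Kf` and `Kη ≤ 2` otherwise. -/

section GradientStep

variable {F : Type*} [NormedAddCommGroup F] [InnerProductSpace ℝ F] [CompleteSpace F]
  {L : F → ℝ}

theorem hasDerivAt_comp_add_smul {u d : F} {t : ℝ} (hL : DifferentiableAt ℝ L (u + t • d)) :
    HasDerivAt (fun s : ℝ => L (u + s • d)) ⟪gradient L (u + t • d), d⟫ t := by
  have hline : HasDerivAt (fun s : ℝ => u + s • d) d t := by
    simpa using ((hasDerivAt_id t).smul_const d).const_add u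
  simpa [InnerProductSpace.toDual_apply_apply, Function.comp_def] using
    hL.hasGradientAt.hasFDerivAt.comp_hasDerivAt t hline

theorem ConvexOn.add_inner_gradient_le (hconv : ConvexOn ℝ univ L)
    {u : F} (hL : DifferentiableAt ℝ L u) (v : F) :
    L u + ⟪gradient L u, v - u⟫ ≤ L v := by
  have hline : ConvexOn ℝ univ fun s : ℝ => L (u + s • (v - u)) := by
    simpa [Function.comp_def, AffineMap.lineMap_apply, add_comm] using
      hconv.comp_affineMap (AffineMap.lineMap u v)
  have hslope := hline.le_slope_of_hasDerivAt (mem_univ 0) (mem_univ 1) zero_lt_one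
    (hasDerivAt_comp_add_smul (by simpa using hL))
  simp only [slope_def_field, zero_smul, add_zero, one_smul, add_sub_cancel, sub_zero,
    div_one] at hslope
  linarith

theorem le_add_inner_gradient_add_half_mul_sq {K : ℝ} (hL : Differentiable ℝ L)
    (hlip : ∀ u v, ‖gradient L u - gradient L v‖ ≤ K * ‖u - v‖) (u v : F) :
    L v ≤ L u + ⟪gradient L u, v - u⟫ + K / 2 * ‖v - u‖ ^ 2 := by
  set d := v - u
  have hbound := image_le_of_deriv_right_le_deriv_boundary (a := 0) (b := 1)
    (f := fun t : ℝ => L (u + t • d) - t * ⟪gradient L u, d⟫)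
    (f' := fun t => ⟪gradient L (u + t • d) - gradient L u, d⟫)
    (B := fun t => L u + K * ‖d‖ ^ 2 / 2 * t ^ 2) (B' := fun t => K * ‖d‖ ^ 2 * t)
    ?_ ?_ (by simp) (by fun_prop) ?_ ?_ (right_mem_Icc.2 zero_le_one)
  · simp only [one_smul, one_mul, d, add_sub_cancel] at hbound
    linarith
  · have := hL.continuous
    exact Continuous.continuousOn (by fun_prop)
  · intro t _
    have h := (hasDerivAt_comp_add_smul (hL (u + t • d))).sub
      (hasDerivAt_mul_const ⟪gradient L u, d⟫)
    rw [← inner_sub_left] at h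
    exact h.hasDerivWithinAt
  · intro t _
    refine (((hasDerivAt_pow 2 t).const_mul (K * ‖d‖ ^ 2 / 2)).const_add (L u)).congr_deriv
      ?_ |>.hasDerivWithinAt
    norm_num
    ring
  · intro t ht
    calc ⟪gradient L (u + t • d) - gradient L u, d⟫
        ≤ ‖gradient L (u + t • d) - gradient L u‖ * ‖d‖ := real_inner_le_norm _ _
      _ ≤ K * ‖t • d‖ * ‖d‖ := by
          gcongr
          simpa using hlip (u + t • d) u
      _ = K * ‖d‖ ^ 2 * t := by
          rw [norm_smul, Real.norm_of_nonneg ht.1]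
          ring

theorem ConvexOn.le_of_gradient_eq_zero (hconv : ConvexOn ℝ univ L) {wstar : F}
    (hL : DifferentiableAt ℝ L wstar) (hstar : gradient L wstar = 0) (v : F) :
    L wstar ≤ L v := by
  simpa [hstar] using hconv.add_inner_gradient_le hL v

variable {K : ℝ} {wstar : F}

theorem le_add_inner_add_inv_mul_sq (hK : 0 < K) (hL : Differentiable ℝ L)
    (hlip : ∀ u v, ‖gradient L u - gradient L v‖ ≤ K * ‖u - v‖) (u y : F) :
    L (u + K⁻¹ • y) ≤ L u + K⁻¹ * ⟪gradient L u, y⟫ + K⁻¹ * ‖y‖ ^ 2 / 2 := by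
  have h := le_add_inner_gradient_add_half_mul_sq hL hlip u (u + K⁻¹ • y)
  rw [add_sub_cancel_left, inner_smul_right, norm_smul, Real.norm_of_nonneg (inv_nonneg.2 hK.le)]
    at h
  refine h.trans_eq ?_
  congr 1
  field_simp

theorem norm_gradient_sq_le (hK : 0 < K) (hconv : ConvexOn ℝ univ L) (hL : Differentiable ℝ L)
    (hlip : ∀ u v, ‖gradient L u - gradient L v‖ ≤ K * ‖u - v‖)
    (hstar : gradient L wstar = 0) (w : F) :
    ‖gradient L w‖ ^ 2 ≤ 2 * K * (L w - L wstar) := by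
  have hmin := hconv.le_of_gradient_eq_zero (hL wstar) hstar (w + K⁻¹ • -gradient L w)
  have hstep := le_add_inner_add_inv_mul_sq hK hL hlip w (-gradient L w)
  rw [inner_neg_right, real_inner_self_eq_norm_sq, norm_neg] at hstep
  have hKinv : K * K⁻¹ = 1 := mul_inv_cancel₀ hK.ne'
  nlinarith

theorem inner_gradient_sub_ge (hK : 0 < K) (hconv : ConvexOn ℝ univ L) (hL : Differentiable ℝ L)
    (hlip : ∀ u v, ‖gradient L u - gradient L v‖ ≤ K * ‖u - v‖)
    (hstar : gradient L wstar = 0) (w : F) :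
    2 * K * (L w - L wstar) + ‖gradient L w‖ ^ 2 ≤ 2 * K * ⟪gradient L w, w - wstar⟫ := by
  have hlow := hconv.add_inner_gradient_le (hL w) (wstar + K⁻¹ • gradient L w)
  have hup := le_add_inner_add_inv_mul_sq hK hL hlip wstar (gradient L w)
  rw [hstar, inner_zero_left, mul_zero, add_zero] at hup
  have hzw : wstar + K⁻¹ • gradient L w - w = K⁻¹ • gradient L w - (w - wstar) := by abel
  rw [hzw, inner_sub_right, inner_smul_right, real_inner_self_eq_norm_sq] at hlow
  have hKinv : K * K⁻¹ = 1 := mul_inv_cancel₀ hK.ne'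
  nlinarith

theorem norm_sub_smul_gradient_sub_sq_le (hK : 0 < K) (hconv : ConvexOn ℝ univ L)
    (hL : Differentiable ℝ L) (hlip : ∀ u v, ‖gradient L u - gradient L v‖ ≤ K * ‖u - v‖)
    (hstar : gradient L wstar = 0) {η : ℝ} (hη0 : 0 < η) (hη : η ≤ 2 / K) (w : F) :
    ‖w - η • gradient L w - wstar‖ ^ 2 ≤
      ‖w - wstar‖ ^ 2 - (2 * η - K * η ^ 2) * (L w - L wstar) := by
  have hG := norm_gradient_sq_le hK hconv hL hlip hstar w
  have hco := inner_gradient_sub_ge hK hconv hL hlip hstar w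
  set g := gradient L w
  set f := L w - L wstar
  have hKη : K * η ≤ 2 := by rwa [le_div_iff₀' hK] at hη
  have hexp : ‖w - η • g - wstar‖ ^ 2 =
      ‖w - wstar‖ ^ 2 - 2 * η * ⟪g, w - wstar⟫ + η ^ 2 * ‖g‖ ^ 2 := by
    rw [sub_right_comm, norm_sub_sq_real, inner_smul_right, real_inner_comm, norm_smul,
      Real.norm_of_nonneg hη0.le]
    ring
  have hrem : η * (K * η - 1) * ‖g‖ ^ 2 ≤ K ^ 2 * η ^ 2 * f := by
    have hf : 0 ≤ f := by nlinarith [sq_nonneg ‖g‖]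
    rcases le_or_gt (K * η) 1 with hsmall | hlarge
    · nlinarith [mul_nonneg (mul_nonneg hη0.le (sub_nonneg.2 hsmall)) (sq_nonneg ‖g‖),
        (by positivity : 0 ≤ K ^ 2 * η ^ 2 * f)]
    · nlinarith [mul_le_mul_of_nonneg_left hG (by positivity : 0 ≤ η * (K * η - 1)),
        mul_nonneg (sub_nonneg.2 hKη) (by positivity : 0 ≤ η * K * f)]
  rw [hexp]
  refine le_of_mul_le_mul_left ?_ hK
  nlinarith

end GradientStep

theorem stmt_4 (p : ℕ) (K : ℝ) (hK : 0 < K)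
    (L : EuclideanSpace ℝ (Fin p) → ℝ)
    (hconv : ConvexOn ℝ Set.univ L)
    (hdiff : Differentiable ℝ L)
    (hlip : ∀ u v : EuclideanSpace ℝ (Fin p),
      ‖gradient L u - gradient L v‖ ≤ K * ‖u - v‖)
    (wstar : EuclideanSpace ℝ (Fin p)) (hstar : gradient L wstar = 0)
    (η : ℝ) (hη0 : 0 < η) (hη : η ≤ 2 / K)
    (w Δ : EuclideanSpace ℝ (Fin p)) (A : EuclideanSpace ℝ (Fin p))
    (hA : A = Δ - gradient L w) :
    ‖(w - η • Δ) - wstar‖ ^ 2 ≤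
      ‖w - wstar‖ ^ 2 - (2 * η - K * η ^ 2) * (L w - L wstar)
        - 2 * η * ⟪w - η • gradient L w - wstar, A⟫ + η ^ 2 * ‖A‖ ^ 2 := by
  have hexact := norm_sub_smul_gradient_sub_sq_le hK hconv hdiff hlip hstar hη0 hη w
  have hsplit : w - η • Δ - wstar = (w - η • gradient L w - wstar) - η • A := by
    rw [hA, smul_sub]
    abel
  rw [hsplit, norm_sub_sq_real, inner_smul_right, norm_smul, Real.norm_of_nonneg hη0.le, mul_pow]
  linarith
end

section
/- Let p and b be positive integers, S₁, S₂ > 0, and for S > 0 let clip_S : ℝ^p → ℝ^p denote the radial clipping map clip_S(x) = x / max(1, ‖x‖/S), where ‖·‖ is the Euclidean norm. Fix a mask M ∈ {0,1}^p and define, for a batch g = (g₁, …, g_b) of vectors in ℝ^p, the output F(g) = clip_{S₂}( M ⊙ ( (1/b) ∑_{j=1}^b clip_{S₁}(g_j) ) ), where ⊙ denotes the coordinatewise (Hadamard) product. Then for any two batches g and g′ that agree in all but one index j₀, ‖F(g) − F(g′)‖ ≤ 2·min(S₁/b, S₂). -/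
/-!
Every stage of `F` is 1-Lipschitz: clipping at norm `S` is the metric projection onto the closed
ball of radius `S`, hence nonexpansive, and masking multiplies coordinates by numbers of absolute
value at most one. Changing one sample moves the sum of the clipped samples by at most `2 S₁`, so
the average moves by at most `2 S₁ / b`, and so does `F`. Independently, both outputs of `F` lie
in the ball of radius `S₂`, so they differ by at most `2 S₂`.
-/

open RealInnerProductSpace

section RadialClip

variable {E : Type*} [NormedAddCommGroup E] [InnerProductSpace ℝ E] {S : ℝ}

lemma norm_sub_le_of_inner_sub_nonpos {P : E → E}
    (hP : ∀ x y, ⟪x - P x, P y - P x⟫ ≤ 0) (x y : E) : ‖P x - P y‖ ≤ ‖x - y‖ := by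
  have hsq : ‖P x - P y‖ ^ 2 ≤ ⟪x - y, P x - P y⟫ := by
    have hx := hP x y
    have hy := hP y x
    have hsplit : ⟪x - y, P x - P y⟫ - ‖P x - P y‖ ^ 2
        = -⟪x - P x, P y - P x⟫ - ⟪y - P y, P x - P y⟫ := by
      rw [← real_inner_self_eq_norm_sq, ← inner_neg_right (x := x - P x), neg_sub,
        ← inner_sub_left, ← inner_sub_left]
      congr 1
      abel
    linarith
  have hcs := real_inner_le_norm (x - y) (P x - P y)
  rcases (norm_nonneg (P x - P y)).eq_or_lt with h₀ | h₀
  · rw [← h₀]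
    exact norm_nonneg _
  · nlinarith

noncomputable def radialClip (S : ℝ) (x : E) : E := (max 1 (‖x‖ / S))⁻¹ • x

lemma norm_radialClip_le (hS : 0 < S) (x : E) : ‖radialClip S x‖ ≤ S := by
  have hmax : 0 < max 1 (‖x‖ / S) := lt_max_of_lt_left one_pos
  have hx : ‖x‖ ≤ max 1 (‖x‖ / S) * S := (div_le_iff₀ hS).mp (le_max_right _ _)
  rw [radialClip, norm_smul, Real.norm_eq_abs, abs_inv, abs_of_pos hmax, inv_mul_le_iff₀ hmax]
  exact hx

lemma radialClip_of_norm_le {x : E} (hx : ‖x‖ ≤ S) : radialClip S x = x := by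
  rw [radialClip, max_eq_left (div_le_one_of_le₀ hx ((norm_nonneg x).trans hx)), inv_one,
    one_smul]

lemma radialClip_of_lt_norm (hS : 0 < S) {x : E} (hx : S < ‖x‖) :
    radialClip S x = (S / ‖x‖) • x := by
  rw [radialClip, max_eq_right ((one_le_div₀ hS).mpr hx.le), inv_div]

lemma inner_sub_radialClip_nonpos (hS : 0 < S) (x : E) {z : E} (hz : ‖z‖ ≤ S) :
    ⟪x - radialClip S x, z - radialClip S x⟫ ≤ 0 := by
  rcases le_or_gt ‖x‖ S with hx | hx
  · simp [radialClip_of_norm_le hx]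
  have hx₀ : 0 < ‖x‖ := hS.trans hx
  have hscale : 0 ≤ 1 - S / ‖x‖ := sub_nonneg.mpr ((div_le_one hx₀).mpr hx.le)
  have hinner : ⟪x, z⟫ ≤ ‖x‖ * S :=
    (real_inner_le_norm x z).trans (mul_le_mul_of_nonneg_left hz hx₀.le)
  have hdecomp : x - (S / ‖x‖) • x = (1 - S / ‖x‖) • x := by rw [sub_smul, one_smul]
  rw [radialClip_of_lt_norm hS hx, hdecomp, real_inner_smul_left, inner_sub_right,
    real_inner_smul_right, real_inner_self_eq_norm_sq]
  have hcancel : S / ‖x‖ * ‖x‖ ^ 2 = ‖x‖ * S := by field_simp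
  rw [hcancel]
  exact mul_nonpos_of_nonneg_of_nonpos hscale (by linarith)

lemma norm_radialClip_sub_radialClip_le (hS : 0 < S) (x y : E) :
    ‖radialClip S x - radialClip S y‖ ≤ ‖x - y‖ :=
  norm_sub_le_of_inner_sub_nonpos
    (fun x y => inner_sub_radialClip_nonpos hS x (norm_radialClip_le hS y)) x y

end RadialClip

section Mask

variable {ι : Type*} [Fintype ι] {M : ι → ℝ}

lemma norm_toLp_mul_le (hM : ∀ i, |M i| ≤ 1) (v : EuclideanSpace ℝ ι) :
    ‖WithLp.toLp 2 (fun i => M i * v i)‖ ≤ ‖v‖ := by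
  rw [EuclideanSpace.norm_eq, EuclideanSpace.norm_eq]
  gcongr with i
  rw [norm_mul]
  exact mul_le_of_le_one_left (norm_nonneg _) (hM i)

lemma norm_toLp_mul_sub_toLp_mul_le (hM : ∀ i, |M i| ≤ 1) (v w : EuclideanSpace ℝ ι) :
    ‖WithLp.toLp 2 (fun i => M i * v i) - WithLp.toLp 2 (fun i => M i * w i)‖ ≤ ‖v - w‖ := by
  have hdiff : (fun i => M i * v i) - (fun i => M i * w i) = fun i => M i * (v - w) i := by
    ext i
    simp only [Pi.sub_apply, PiLp.sub_apply, mul_sub]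
  rw [← WithLp.toLp_sub, hdiff]
  exact norm_toLp_mul_le hM (v - w)

end Mask

lemma norm_sum_sub_sum_le_of_eq_off {ι E : Type*} [Fintype ι] [SeminormedAddCommGroup E]
    {f f' : ι → E} {S : ℝ} (j₀ : ι) (hagree : ∀ j, j ≠ j₀ → f j = f' j)
    (hf : ∀ j, ‖f j‖ ≤ S) (hf' : ∀ j, ‖f' j‖ ≤ S) :
    ‖∑ j, f j - ∑ j, f' j‖ ≤ 2 * S := by
  have hsum : ∑ j, f j - ∑ j, f' j = f j₀ - f' j₀ := by
    rw [← Finset.sum_sub_distrib, Fintype.sum_eq_single j₀]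
    intro j hj
    rw [hagree j hj, sub_self]
  rw [hsum, two_mul]
  exact norm_sub_le_of_le (hf j₀) (hf' j₀)

theorem stmt_13_general (p b : ℕ) (S₁ S₂ : ℝ)
    (hS₁ : 0 < S₁) (hS₂ : 0 < S₂)
    (clip : ℝ → EuclideanSpace ℝ (Fin p) → EuclideanSpace ℝ (Fin p))
    (hclip : ∀ (S : ℝ) (x : EuclideanSpace ℝ (Fin p)),
      clip S x = (max 1 (‖x‖ / S))⁻¹ • x)
    (M : Fin p → ℝ) (hM : ∀ i, M i = 0 ∨ M i = 1)
    (F : (Fin b → EuclideanSpace ℝ (Fin p)) → EuclideanSpace ℝ (Fin p))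
    (hF : ∀ g : Fin b → EuclideanSpace ℝ (Fin p),
      F g = clip S₂ (WithLp.toLp 2 (fun i =>
        M i * ((1 / (b : ℝ)) • ∑ j : Fin b, clip S₁ (g j)) i)))
    (g g' : Fin b → EuclideanSpace ℝ (Fin p)) (j₀ : Fin b)
    (hagree : ∀ j : Fin b, j ≠ j₀ → g j = g' j) :
    ‖F g - F g'‖ ≤ 2 * min (S₁ / b) S₂ := by
  obtain rfl : clip = radialClip := funext fun S => funext (hclip S)
  have hM₁ : ∀ i, |M i| ≤ 1 := fun i => by rcases hM i with h | h <;> simp [h]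
  set avg := fun g : Fin b → EuclideanSpace ℝ (Fin p) => (1 / (b : ℝ)) • ∑ j, radialClip S₁ (g j)
  have havg : ‖avg g - avg g'‖ ≤ 2 * (S₁ / b) := by
    rw [← smul_sub, norm_smul, Real.norm_of_nonneg (by positivity)]
    calc 1 / (b : ℝ) * ‖∑ j, radialClip S₁ (g j) - ∑ j, radialClip S₁ (g' j)‖
        ≤ 1 / (b : ℝ) * (2 * S₁) := by
          gcongr
          exact norm_sum_sub_sum_le_of_eq_off j₀ (fun j hj => by rw [hagree j hj])
            (fun j => norm_radialClip_le hS₁ _) (fun j => norm_radialClip_le hS₁ _)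
      _ = 2 * (S₁ / b) := by ring
  have hF_avg : ‖F g - F g'‖ ≤ 2 * (S₁ / b) := by
    rw [hF, hF]
    exact (norm_radialClip_sub_radialClip_le hS₂ _ _).trans
      ((norm_toLp_mul_sub_toLp_mul_le hM₁ (avg g) (avg g')).trans havg)
  have hF_ball : ‖F g - F g'‖ ≤ 2 * S₂ := by
    rw [hF, hF, two_mul]
    exact norm_sub_le_of_le (norm_radialClip_le hS₂ _) (norm_radialClip_le hS₂ _)
  rw [mul_min_of_nonneg _ _ zero_le_two]
  exact le_min hF_avg hF_ball

theorem stmt_13 (p b : ℕ) (hp : 0 < p) (hb : 0 < b) (S₁ S₂ : ℝ)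
    (hS₁ : 0 < S₁) (hS₂ : 0 < S₂)
    (clip : ℝ → EuclideanSpace ℝ (Fin p) → EuclideanSpace ℝ (Fin p))
    (hclip : ∀ (S : ℝ) (x : EuclideanSpace ℝ (Fin p)),
      clip S x = (max 1 (‖x‖ / S))⁻¹ • x)
    (M : Fin p → ℝ) (hM : ∀ i, M i = 0 ∨ M i = 1)
    (F : (Fin b → EuclideanSpace ℝ (Fin p)) → EuclideanSpace ℝ (Fin p))
    (hF : ∀ g : Fin b → EuclideanSpace ℝ (Fin p),
      F g = clip S₂ (WithLp.toLp 2 (fun i =>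
        M i * ((1 / (b : ℝ)) • ∑ j : Fin b, clip S₁ (g j)) i)))
    (g g' : Fin b → EuclideanSpace ℝ (Fin p)) (j₀ : Fin b)
    (hagree : ∀ j : Fin b, j ≠ j₀ → g j = g' j) :
    ‖F g - F g'‖ ≤ 2 * min (S₁ / b) S₂ :=
  stmt_13_general p b S₁ S₂ hS₁ hS₂ clip hclip M hM F hF g g' j₀ hagree
end
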